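/- arXiv:2108.02581 — 2 statements merged into one kernel-verified Lean document; each statement's English description precedes it below -/
import Mathlib

section
/- For the limit T-mapping μ* of Δ = (D, FD): if a₁ and a₂ are distinct constants in the same attribute domain dom(A) with μ*(a₁) ∩ μ*(a₂) ≠ ∅, then there exist a functional dependency X → A in FD and a tuple x over X such that μ*(x) ≠ ∅ and μ*(x) ⊆ μ*(a₁) ∩ μ*(a₂). -/
open Set

namespace IncPaper

variable {Attr Const : Type}

/-- A tuple over the universe `Attr` with constants `Const`: a partial assignment. -/
abbrev Tup (Attr Const : Type) := Attr → Option Const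

/-- Well-formedness: each attribute is assigned a constant of its own domain. -/
def WF (dom : Const → Attr) (t : Tup Attr Const) : Prop :=
  ∀ a c, t a = some c → dom c = a

/-- The schema of a tuple: the attributes on which it is defined. -/
def sch (t : Tup Attr Const) : Set Attr := {a | t a ≠ none}

/-- Sub-tuple relation `t₁ ⊑ t₂`. -/
def Sub (t₁ t₂ : Tup Attr Const) : Prop := ∀ a c, t₁ a = some c → t₂ a = some c

/-- A T-mapping assigns a set of naturals to each constant. -/
abbrev TMap (Const : Type) := Const → Set ℕ

/-- Extension of a T-mapping to tuples: intersection over occurring constants. -/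
def tmap (μ : TMap Const) (t : Tup Attr Const) : Set ℕ :=
  {n | ∀ a c, t a = some c → n ∈ μ c}

/-- A functional dependency `X → A`. -/
structure FDep (Attr : Type) where
  X : Set Attr
  A : Attr

/-- Standing assumptions on sets of functional dependencies `X → A`:
`X` nonempty and `A ∉ X`. -/
def GoodFD (FD : Set (FDep Attr)) : Prop := ∀ fd ∈ FD, fd.X.Nonempty ∧ fd.A ∉ fd.X

/-- A T-mapping satisfies the dependency `X → Y`. -/
def SatFD (dom : Const → Attr) (μ : TMap Const) (X Y : Set Attr) : Prop :=
  ∀ x y : Tup Attr Const, WF dom x → WF dom y → sch x = X → sch y = Y →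
    (tmap μ x ∩ tmap μ y).Nonempty → tmap μ x ⊆ tmap μ y

/-- A T-mapping satisfies a dependency `X → A` (single-attribute form). -/
def SatFDA (dom : Const → Attr) (μ : TMap Const) (fd : FDep Attr) : Prop :=
  ∀ x : Tup Attr Const, WF dom x → sch x = fd.X →
    ∀ a : Const, dom a = fd.A → (tmap μ x ∩ μ a).Nonempty → tmap μ x ⊆ μ a

/-- `μ ⊨ Δ` where `Δ = (D, FD)`. -/
def SatDB (dom : Const → Attr) (μ : TMap Const)
    (D : Set (Tup Attr Const)) (FD : Set (FDep Attr)) : Prop :=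
  (∀ t ∈ D, (tmap μ t).Nonempty) ∧ ∀ fd ∈ FD, SatFDA dom μ fd

/-- `Δ ⊢ t`: every T-mapping satisfying `Δ` assigns `t` a nonempty set. -/
def Derives (dom : Const → Attr) (D : Set (Tup Attr Const)) (FD : Set (FDep Attr))
    (t : Tup Attr Const) : Prop :=
  ∀ μ : TMap Const, SatDB dom μ D FD → (tmap μ t).Nonempty

/-- `Δ |∼ t`: `t` is potentially false. -/
def PotFalse (dom : Const → Attr) (D : Set (Tup Attr Const)) (FD : Set (FDep Attr))
    (t : Tup Attr Const) : Prop :=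
  ∃ a a' : Const, a ≠ a' ∧ dom a = dom a' ∧
    ∀ μ : TMap Const, SatDB dom μ D FD → tmap μ t ⊆ μ a ∩ μ a'

/-- The closure `t⁺` of a tuple. -/
def closure (dom : Const → Attr) (D : Set (Tup Attr Const)) (FD : Set (FDep Attr))
    (t : Tup Attr Const) : Set Const :=
  {a | ∀ μ : TMap Const, SatDB dom μ D FD → tmap μ t ⊆ μ a}

/-- The initial T-mapping `μ₀`: identifiers of tuples of `D` containing the constant. -/
def initMap (ident : Tup Attr Const → ℕ) (D : Set (Tup Attr Const)) : TMap Const :=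
  fun c => {n | ∃ t ∈ D, ident t = n ∧ ∃ a, t a = some c}

/-- One step of the saturation sequence enforcing a violated dependency. -/
def SatStep (dom : Const → Attr) (FD : Set (FDep Attr)) (μ μ' : TMap Const) : Prop :=
  ∃ fd ∈ FD, ∃ x : Tup Attr Const, WF dom x ∧ sch x = fd.X ∧
    ∃ a : Const, dom a = fd.A ∧ (tmap μ x ∩ μ a).Nonempty ∧ ¬ tmap μ x ⊆ μ a ∧
      μ' a = μ a ∪ tmap μ x ∧ ∀ c, c ≠ a → μ' c = μ c

/-- An interpretation: a T-mapping satisfying the partition constraint. -/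
def Interp (dom : Const → Attr) (μ : TMap Const) : Prop :=
  ∀ a a' : Const, a ≠ a' → dom a = dom a' → μ a ∩ μ a' = ∅

open Classical in
/-- The tuple `xa`: extend `x` with the constant `a` (on attribute `dom a`). -/
noncomputable def extend (dom : Const → Attr) (x : Tup Attr Const) (a : Const) :
    Tup Attr Const :=
  fun b => if b = dom a then some a else x b

/-- The computed closure `cl(t)` of the closure algorithm (Algorithm 1). -/
inductive InCl (dom : Const → Attr) (D : Set (Tup Attr Const)) (FD : Set (FDep Attr))
    (t : Tup Attr Const) : Const → Prop
  | base (a : Const) (b : Attr) : t b = some a → InCl dom D FD t a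
  | step (fd : FDep Attr) (x : Tup Attr Const) (a : Const) :
      fd ∈ FD → WF dom x → sch x = fd.X → dom a = fd.A →
      (∀ c : Const, (∃ b, x b = some c) → InCl dom D FD t c) →
      Derives dom (insert t D) FD (extend dom x a) →
      InCl dom D FD t a

/-- Two tuples agree (and are defined) on a set of attributes. -/
def agreeOn (t₁ t₂ : Tup Attr Const) (X : Set Attr) : Prop :=
  ∀ b ∈ X, t₁ b = t₂ b ∧ t₁ b ≠ none

open Classical in
/-- The tuple obtained from `t₂` by taking `t₁`'s `A`-value. -/
noncomputable def chaseJoin (fd : FDep Attr) (t₁ t₂ : Tup Attr Const) : Tup Attr Const :=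
  fun b => if b = fd.A then t₁ b else t₂ b

/-- One step of the chase procedure (Algorithm 2): add a new joined tuple. -/
def ChaseStep (FD : Set (FDep Attr)) (S S' : Set (Tup Attr Const)) : Prop :=
  ∃ fd ∈ FD, ∃ t₁ ∈ S, ∃ t₂ ∈ S,
    fd.X ⊆ sch t₁ ∧ fd.A ∈ sch t₁ ∧ fd.X ⊆ sch t₂ ∧ agreeOn t₁ t₂ fd.X ∧
    chaseJoin fd t₁ t₂ ∉ S ∧ S' = insert (chaseJoin fd t₁ t₂) S

/-- Closure of a relation scheme `Q` with respect to `FD`. -/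
inductive InSchCl (FD : Set (FDep Attr)) (Q : Set Attr) : Attr → Prop
  | base (A : Attr) : A ∈ Q → InSchCl FD Q A
  | step (fd : FDep Attr) : fd ∈ FD → (∀ B ∈ fd.X, InSchCl FD Q B) → InSchCl FD Q fd.A

/-- Relational satisfaction of a functional dependency by a set of tuples. -/
def RelSatFD (R : Set (Tup Attr Const)) (fd : FDep Attr) : Prop :=
  ∀ t ∈ R, ∀ t' ∈ R, fd.X ⊆ sch t → fd.A ∈ sch t → fd.X ⊆ sch t' → fd.A ∈ sch t' →
    agreeOn t t' fd.X → t fd.A = t' fd.A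

/-- A repair of `Δ`: a maximal subset of the chased table `D*` satisfying `FD`. -/
def IsRepair (FD : Set (FDep Attr)) (Dstar R : Set (Tup Attr Const)) : Prop :=
  R ⊆ Dstar ∧ (∀ fd ∈ FD, RelSatFD R fd) ∧
    ∀ R', R ⊆ R' → R' ⊆ Dstar → (∀ fd ∈ FD, RelSatFD R' fd) → R' = R

open Classical in
/-- Restriction of a tuple to a schema `X`. -/
noncomputable def restrict (t : Tup Attr Const) (X : Set Attr) : Tup Attr Const :=
  fun b => if b ∈ X then t b else none

/-- Projection `π_X(D)` of a set of tuples. -/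
def projD (Dst : Set (Tup Attr Const)) (X : Set Attr) : Set (Tup Attr Const) :=
  {q | ∃ t ∈ Dst, X ⊆ sch t ∧ q = restrict t X}

/-- Projection `π_X(FD)` of a set of functional dependencies. -/
def projFD (FD : Set (FDep Attr)) (X : Set Attr) : Set (FDep Attr) :=
  {fd ∈ FD | fd.X ⊆ X ∧ fd.A ∈ X}

/-- Selection `σ_Γ(D)`. -/
def sel (Γ : Tup Attr Const → Prop) (Dst : Set (Tup Attr Const)) :
    Set (Tup Attr Const) :=
  {t ∈ Dst | Γ t}

/-- `inc(X → A)`: the `X`-values with conflicting `A`-values in `D*`. -/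
def IncSet (Dstar : Set (Tup Attr Const)) (fd : FDep Attr) : Set (Tup Attr Const) :=
  {x | sch x = fd.X ∧ ∃ q ∈ Dstar, ∃ q' ∈ Dstar, Sub x q ∧ Sub x q' ∧
    ∃ a a' : Const, q fd.A = some a ∧ q' fd.A = some a' ∧ a ≠ a'}

/-- The output of the repair-generation procedure for a choice function. -/
def genRepair (FD : Set (FDep Attr)) (Dstar : Set (Tup Attr Const))
    (choice : FDep Attr → Tup Attr Const → Const) : Set (Tup Attr Const) :=
  {q | q ∈ Dstar ∧ ∀ fd ∈ FD, ∀ x ∈ IncSet Dstar fd,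
    Sub x q → fd.A ∈ sch q → q fd.A = some (choice fd x)}

/-- Belnap's four truth values. -/
inductive Four where
  | t
  | b
  | n
  | f
  deriving DecidableEq

namespace Four

/-- Knowledge ordering `≼ₖ`. -/
def kle (x y : Four) : Prop := x = y ∨ x = n ∨ y = b

/-- Truth ordering `≼ₜ`. -/
def tle (x y : Four) : Prop := x = y ∨ x = f ∨ y = t

/-- Knowledge join `⊕`. -/
def oplus (x y : Four) : Four :=
  if x = n then y else if y = n then x else if x = y then x else b

/-- Knowledge meet `⊗`. -/
def otimes (x y : Four) : Four :=
  if x = b then y else if y = b then x else if x = y then x else n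

/-- Truth join `∨`. -/
def lor (x y : Four) : Four :=
  if x = f then y else if y = f then x else if x = y then x else t

/-- Truth meet `∧`. -/
def land (x y : Four) : Four :=
  if x = t then y else if y = t then x else if x = y then x else f

end Four

/-- The four truth values of tuples. -/
inductive TV where
  | vtrue
  | vfalse
  | vinc
  | vunkn
  deriving DecidableEq

namespace TV

/-- Knowledge ordering `◁` on truth values: `unkn ◁ true ◁ inc`, `unkn ◁ false ◁ inc`. -/
def kle (x y : TV) : Prop := x = y ∨ x = vunkn ∨ y = vinc

/-- Knowledge join `⊕` on truth values. -/
def kjoin (x y : TV) : TV :=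
  if x = vunkn then y else if y = vunkn then x else if x = y then x else vinc

end TV

open Classical in
/-- The truth value `v_Δ(t)` of a tuple in `Δ = (D, FD)`. -/
noncomputable def tval (dom : Const → Attr) (D : Set (Tup Attr Const))
    (FD : Set (FDep Attr)) (t : Tup Attr Const) : TV :=
  if Derives dom D FD t then (if PotFalse dom D FD t then .vinc else .vtrue)
  else (if PotFalse dom D FD t then .vfalse else .vunkn)

/-!
Identifiers only ever spread along functional dependencies: a step of the saturation enlarges a
single `μ(a)` by `μ(x)` for some `X → A` and `x` over `X` with `μ(xa) ≠ ∅`. Since `μ₀` keeps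
distinct constants of one attribute apart, the step that first makes `μ(a₁)` and `μ(a₂)` meet
enlarges one of them, say `a₁`, by `μ(x)`, and the common identifier lies in `μ(x) ∩ μ(a₂)`. So
`x` meets both `a₁` and `a₂`; the sequence only grows, and in the limit, where no dependency is
violated, this forces `μ*(x) ⊆ μ*(a₁) ∩ μ*(a₂)`.
-/

variable {dom : Const → Attr} {FD : Set (FDep Attr)} {μ ν : TMap Const}

theorem tmap_mono (h : μ ≤ ν) (x : Tup Attr Const) : tmap μ x ⊆ tmap ν x :=
  fun _ hn a c hac => h c (hn a c hac)

theorem interp_initMap {D : Set (Tup Attr Const)} {ident : Tup Attr Const → ℕ}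
    (hDwf : ∀ t ∈ D, WF dom t) (hid : ∀ t₁ ∈ D, ∀ t₂ ∈ D, ident t₁ = ident t₂ → t₁ = t₂) :
    Interp dom (initMap ident D) := by
  intro a₁ a₂ hne hdom
  refine eq_empty_of_forall_notMem ?_
  rintro n ⟨⟨t, ht, rfl, b₁, hb₁⟩, ⟨t', ht', hn, b₂, hb₂⟩⟩
  obtain rfl : t = t' := hid t ht t' ht' hn.symm
  have hb : b₁ = b₂ := by rw [← hDwf t ht b₁ a₁ hb₁, ← hDwf t ht b₂ a₂ hb₂, hdom]
  subst hb
  exact hne (Option.some.inj (hb₁.symm.trans hb₂))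

theorem SatStep.le (h : SatStep dom FD μ ν) : μ ≤ ν := by
  obtain ⟨-, -, x, -, -, a, -, -, -, hupd, hrest⟩ := h
  intro c
  by_cases hc : c = a
  · subst hc
    exact hupd ▸ subset_union_left
  · exact (hrest c hc).ge

theorem not_satStep_self : ¬ SatStep dom FD μ μ := by
  rintro ⟨-, -, x, -, -, a, -, -, hnsub, hupd, -⟩
  exact hnsub (hupd ▸ subset_union_right)

theorem satFDA_of_forall_not_satStep (h : ∀ ν, ¬ SatStep dom FD μ ν) {fd : FDep Attr}
    (hfd : fd ∈ FD) : SatFDA dom μ fd := by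
  classical
  intro x hwf hsch a hda hxa
  by_contra hnsub
  exact h (Function.update μ a (μ a ∪ tmap μ x))
    ⟨fd, hfd, x, hwf, hsch, a, hda, hxa, hnsub, by simp, fun c hc => by simp [hc]⟩

def FDLinked (dom : Const → Attr) (FD : Set (FDep Attr)) (μ : TMap Const) (a₁ a₂ : Const) :
    Prop :=
  ∃ fd ∈ FD, fd.A = dom a₁ ∧ ∃ x : Tup Attr Const, WF dom x ∧ sch x = fd.X ∧
    (tmap μ x ∩ μ a₁).Nonempty ∧ (tmap μ x ∩ μ a₂).Nonempty

namespace FDLinked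

variable {a₁ a₂ : Const}

theorem mono (h : FDLinked dom FD μ a₁ a₂) (hle : μ ≤ ν) : FDLinked dom FD ν a₁ a₂ := by
  obtain ⟨fd, hfd, hA, x, hwf, hsch, h₁, h₂⟩ := h
  exact ⟨fd, hfd, hA, x, hwf, hsch, h₁.mono (inter_subset_inter (tmap_mono hle x) (hle a₁)),
    h₂.mono (inter_subset_inter (tmap_mono hle x) (hle a₂))⟩

theorem symm (h : FDLinked dom FD μ a₁ a₂) (hdom : dom a₁ = dom a₂) :
    FDLinked dom FD μ a₂ a₁ := by
  obtain ⟨fd, hfd, hA, x, hwf, hsch, h₁, h₂⟩ := h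
  exact ⟨fd, hfd, hA.trans hdom, x, hwf, hsch, h₂, h₁⟩

theorem exists_tmap_subset_inter (h : FDLinked dom FD μ a₁ a₂) (hsat : ∀ fd ∈ FD, SatFDA dom μ fd)
    (hdom : dom a₁ = dom a₂) :
    ∃ fd ∈ FD, fd.A = dom a₁ ∧ ∃ x : Tup Attr Const, WF dom x ∧ sch x = fd.X ∧
      (tmap μ x).Nonempty ∧ tmap μ x ⊆ μ a₁ ∩ μ a₂ := by
  obtain ⟨fd, hfd, hA, x, hwf, hsch, h₁, h₂⟩ := h
  exact ⟨fd, hfd, hA, x, hwf, hsch, h₁.mono inter_subset_left,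
    Set.subset_inter (hsat fd hfd x hwf hsch a₁ hA.symm h₁)
      (hsat fd hfd x hwf hsch a₂ (hA.trans hdom).symm h₂)⟩

end FDLinked

theorem SatStep.fdLinked_of_inter_nonempty {a₁ a₂ : Const} (hstep : SatStep dom FD μ ν)
    (hne : a₁ ≠ a₂) (hdom : dom a₁ = dom a₂) (hμ : μ a₁ ∩ μ a₂ = ∅)
    (hν : (ν a₁ ∩ ν a₂).Nonempty) : FDLinked dom FD μ a₁ a₂ := by
  obtain ⟨fd, hfd, x, hwf, hsch, a, hda, hxa, -, hupd, hrest⟩ := hstep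
  wlog ha : a = a₁ generalizing a₁ a₂
  · by_cases ha₂ : a = a₂
    · exact (this hne.symm hdom.symm (inter_comm _ _ ▸ hμ) (inter_comm _ _ ▸ hν) ha₂).symm
        hdom.symm
    · rw [hrest a₁ (Ne.symm ha), hrest a₂ (Ne.symm ha₂), hμ] at hν
      exact absurd hν Set.not_nonempty_empty
  subst ha
  obtain ⟨n, hn₁, hn₂⟩ := hν
  rw [hrest a₂ hne.symm] at hn₂
  rw [hupd] at hn₁
  -- the common identifier cannot be an old one of `a₁`, so it came in with `x`
  have hnx : n ∈ tmap μ x := hn₁.resolve_left fun h => (hμ ▸ ⟨h, hn₂⟩ : n ∈ (∅ : Set ℕ))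
  exact ⟨fd, hfd, hda.symm, x, hwf, hsch, hxa, n, hnx, hn₂⟩

theorem fdLinked_of_inter_nonempty {μs : ℕ → TMap Const} (h0 : Interp dom (μs 0))
    (hstep : ∀ i, SatStep dom FD (μs i) (μs (i + 1)) ∨ μs (i + 1) = μs i) {a₁ a₂ : Const}
    (hne : a₁ ≠ a₂) (hdom : dom a₁ = dom a₂) :
    ∀ i, (μs i a₁ ∩ μs i a₂).Nonempty → FDLinked dom FD (μs i) a₁ a₂
  | 0, h => absurd (h0 a₁ a₂ hne hdom ▸ h) Set.not_nonempty_empty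
  | i + 1, h => by
    by_cases hold : (μs i a₁ ∩ μs i a₂).Nonempty
    · have hle : μs i ≤ μs (i + 1) := (hstep i).elim SatStep.le (fun h => h.ge)
      exact (fdLinked_of_inter_nonempty h0 hstep hne hdom i hold).mono hle
    · rw [not_nonempty_iff_eq_empty] at hold
      rcases hstep i with hs | heq
      · exact (hs.fdLinked_of_inter_nonempty hne hdom hold h).mono hs.le
      · exact absurd (heq ▸ h) (hold ▸ Set.not_nonempty_empty)

theorem limit_overlap_from_fd_general (dom : Const → Attr)
    (D : Set (Tup Attr Const)) (hDwf : ∀ t ∈ D, WF dom t)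
    (ident : Tup Attr Const → ℕ)
    (hid : ∀ t₁ ∈ D, ∀ t₂ ∈ D, ident t₁ = ident t₂ → t₁ = t₂)
    (FD : Set (FDep Attr))
    (μs : ℕ → TMap Const) (h0 : μs 0 = initMap ident D)
    (hfair : ∀ i, SatStep dom FD (μs i) (μs (i + 1)) ∨
      (μs (i + 1) = μs i ∧ ∀ ν : TMap Const, ¬ SatStep dom FD (μs i) ν))
    (N : ℕ) (hN : ∀ i, N ≤ i → μs i = μs N) :
    ∀ a₁ a₂ : Const, a₁ ≠ a₂ → dom a₁ = dom a₂ →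
      (μs N a₁ ∩ μs N a₂).Nonempty →
      ∃ fd ∈ FD, fd.A = dom a₁ ∧ ∃ x : Tup Attr Const, WF dom x ∧ sch x = fd.X ∧
        (tmap (μs N) x).Nonempty ∧ tmap (μs N) x ⊆ μs N a₁ ∩ μs N a₂ := by
  intro a₁ a₂ hne hdom hint
  have hsat : ∀ fd ∈ FD, SatFDA dom (μs N) fd := by
    refine fun fd => satFDA_of_forall_not_satStep ?_
    rcases hfair N with hs | ⟨-, hno⟩
    · exact absurd (hN (N + 1) N.le_succ ▸ hs) not_satStep_self
    · exact hno
  have hlinked : FDLinked dom FD (μs N) a₁ a₂ :=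
    fdLinked_of_inter_nonempty (h0 ▸ interp_initMap hDwf hid)
      (fun i => (hfair i).imp_right And.left) hne hdom N hint
  exact hlinked.exists_tmap_subset_inter hsat hdom

/-- if the limit `μ*` gives a common identifier to two distinct constants of
the same attribute domain, this is due to a functional dependency: some `X → A ∈ FD` and
`x` over `X` with `μ*(x) ≠ ∅` and `μ*(x) ⊆ μ*(a₁) ∩ μ*(a₂)`. -/
theorem limit_overlap_from_fd [Fintype Attr] (dom : Const → Attr)
    (D : Set (Tup Attr Const)) (hDfin : D.Finite) (hDwf : ∀ t ∈ D, WF dom t)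
    (ident : Tup Attr Const → ℕ)
    (hid : ∀ t₁ ∈ D, ∀ t₂ ∈ D, ident t₁ = ident t₂ → t₁ = t₂)
    (FD : Set (FDep Attr)) (hFD : GoodFD FD)
    (μs : ℕ → TMap Const) (h0 : μs 0 = initMap ident D)
    (hfair : ∀ i, SatStep dom FD (μs i) (μs (i + 1)) ∨
      (μs (i + 1) = μs i ∧ ∀ ν : TMap Const, ¬ SatStep dom FD (μs i) ν))
    (N : ℕ) (hN : ∀ i, N ≤ i → μs i = μs N) :
    ∀ a₁ a₂ : Const, a₁ ≠ a₂ → dom a₁ = dom a₂ →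
      (μs N a₁ ∩ μs N a₂).Nonempty →
      ∃ fd ∈ FD, fd.A = dom a₁ ∧ ∃ x : Tup Attr Const, WF dom x ∧ sch x = fd.X ∧
        (tmap (μs N) x).Nonempty ∧ tmap (μs N) x ⊆ μs N a₁ ∩ μs N a₂ :=
  limit_overlap_from_fd_general dom D hDwf ident hid FD μs h0 hfair N hN

end IncPaper
end

section
/- The closure algorithm is complete: if a constant a is not in the computed closure cl(t), then there exists a T-mapping μ satisfying Δ with μ(t) ⊄ μ(a). Hence the algorithm computes exactly the closure t⁺ = {a : ∀μ ⊨ Δ, μ(t) ⊆ μ(a)}. -/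
open Set

namespace IncPaper

variable {Attr Const : Type}

/-!
Soundness: every constant added by the algorithm is forced, in each `μ ⊨ Δ`, by a dependency
`X → A` whose premise `xa` is derivable from `Δ_t`, so it lies in `t⁺`.

Completeness: take one identifier per tuple `u` of `D ∪ {t}` and let row `u` contain the
constants of `u`, closed under the rule "if some row contains `xa` and row `v` contains `x`,
then row `v` contains `a`". The resulting T-mapping satisfies `Δ` by construction, while every
constant of row `u` lies in the closure of `u`; hence row `t` only contains constants of
`cl(t)`, and for `a ∉ cl(t)` the identifier of `t` lies in `μ(t)` but not in `μ(a)`.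
-/

theorem mem_tmap_extend {dom : Const → Attr} {μ : TMap Const} {x : Tup Attr Const}
    {a : Const} {n : ℕ} (hx : x (dom a) = none) :
    n ∈ tmap μ (extend dom x a) ↔ n ∈ tmap μ x ∧ n ∈ μ a := by
  refine ⟨fun h => ⟨fun b c hbc => h b c ?_, h (dom a) a (by simp [extend])⟩, ?_⟩
  · have hb : b ≠ dom a := by rintro rfl; simp [hx] at hbc
    simpa [extend, hb] using hbc
  · rintro ⟨hnx, hna⟩ b c hbc
    by_cases hb : b = dom a
    · simp only [extend, hb, if_true, Option.some.injEq] at hbc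
      exact hbc ▸ hna
    · simp only [extend, hb, if_false] at hbc
      exact hnx b c hbc

theorem GoodFD.apply_eq_none {FD : Set (FDep Attr)} (hFD : GoodFD FD) {fd : FDep Attr}
    (hfd : fd ∈ FD) {x : Tup Attr Const} (hx : sch x = fd.X) : x fd.A = none := by
  by_contra h
  exact (hFD fd hfd).2 (hx ▸ h)

theorem InCl.mem_closure {dom : Const → Attr} {D : Set (Tup Attr Const)}
    {FD : Set (FDep Attr)} (hFD : GoodFD FD) {t : Tup Attr Const} {a : Const}
    (h : InCl dom D FD t a) : a ∈ closure dom D FD t := by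
  induction h with
  | base a b hb => exact fun μ _ n hn => hn b a hb
  | step fd x a hfd hwfx hschx hdoma _ hder ih =>
    intro μ hμ n hn
    have hμt : SatDB dom μ (insert t D) FD :=
      ⟨Set.forall_mem_insert.2 ⟨⟨n, hn⟩, hμ.1⟩, hμ.2⟩
    obtain ⟨m, hm⟩ := hder μ hμt
    have hxa : x (dom a) = none := hdoma ▸ hFD.apply_eq_none hfd hschx
    have hn_x : n ∈ tmap μ x := fun b c hbc => ih c ⟨b, hbc⟩ μ hμ hn
    exact hμ.2 fd hfd x hwfx hschx a hdoma ⟨m, (mem_tmap_extend hxa).1 hm⟩ hn_x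

/-- The limit of the saturation sequence from the initial T-mapping, row by row: `c` lies in
the row of the tuple `u`. -/
inductive InSat (dom : Const → Attr) (D : Set (Tup Attr Const)) (FD : Set (FDep Attr)) :
    Tup Attr Const → Const → Prop
  | base {u : Tup Attr Const} {b : Attr} {c : Const} : u b = some c → InSat dom D FD u c
  | step {fd : FDep Attr} {x u v : Tup Attr Const} {a : Const} :
      fd ∈ FD → WF dom x → sch x = fd.X → dom a = fd.A → u ∈ D →
      (∀ b c, x b = some c → InSat dom D FD u c) → InSat dom D FD u a →
      (∀ b c, x b = some c → InSat dom D FD v c) → InSat dom D FD v a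

def satMap (dom : Const → Attr) (D : Set (Tup Attr Const)) (FD : Set (FDep Attr))
    (ident : Tup Attr Const → ℕ) : TMap Const :=
  fun c => {n | ∃ u ∈ D, ident u = n ∧ InSat dom D FD u c}

section satMap

variable {dom : Const → Attr} {D : Set (Tup Attr Const)} {FD : Set (FDep Attr)}
  {ident : Tup Attr Const → ℕ}

theorem InSat.mem_closure {u : Tup Attr Const} {c : Const} (h : InSat dom D FD u c) :
    c ∈ closure dom D FD u := by
  induction h with
  | base hb => exact fun μ _ n hn => hn _ _ hb
  | @step fd x u v a hfd hwfx hschx hdoma hu _ _ _ ihux ihua ihvx =>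
    intro μ hμ n hn
    obtain ⟨m, hm⟩ := hμ.1 u hu
    have hm_x : m ∈ tmap μ x := fun b c hbc => ihux b c hbc μ hμ hm
    have hn_x : n ∈ tmap μ x := fun b c hbc => ihvx b c hbc μ hμ hn
    exact hμ.2 fd hfd x hwfx hschx a hdoma ⟨m, hm_x, ihua μ hμ hm⟩ hn_x

theorem ident_mem_satMap_iff (hident : Set.InjOn ident D) {u : Tup Attr Const} (hu : u ∈ D)
    {c : Const} : ident u ∈ satMap dom D FD ident c ↔ InSat dom D FD u c := by
  refine ⟨?_, fun h => ⟨u, hu, rfl, h⟩⟩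
  rintro ⟨u', hu', hid, h⟩
  exact hident hu' hu hid ▸ h

theorem ident_mem_tmap_satMap_iff (hident : Set.InjOn ident D) {u : Tup Attr Const}
    (hu : u ∈ D) {x : Tup Attr Const} :
    ident u ∈ tmap (satMap dom D FD ident) x ↔ ∀ b c, x b = some c → InSat dom D FD u c := by
  simp only [tmap, Set.mem_ofPred_eq, ident_mem_satMap_iff hident hu]

theorem satDB_satMap (hident : Set.InjOn ident D) (hFD : GoodFD FD) :
    SatDB dom (satMap dom D FD ident) D FD := by
  refine ⟨fun u hu => ⟨ident u, (ident_mem_tmap_satMap_iff hident hu).2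
    fun _ _ => InSat.base⟩, ?_⟩
  rintro fd hfd x hwfx hschx a hdoma ⟨_, hx, u, hu, rfl, hua⟩ n hn
  -- `X ≠ ∅`, so the identifier `n ∈ μ(x)` is that of a row `v` containing `x`.
  obtain ⟨b₀, hb₀⟩ := (hFD fd hfd).1
  obtain ⟨c₀, hc₀⟩ := Option.ne_none_iff_exists'.mp (show b₀ ∈ sch x from hschx ▸ hb₀)
  obtain ⟨v, hv, rfl, -⟩ := hn b₀ c₀ hc₀
  exact (ident_mem_satMap_iff hident hv).2 <| .step hfd hwfx hschx hdoma hu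
    ((ident_mem_tmap_satMap_iff hident hu).1 hx) hua
    ((ident_mem_tmap_satMap_iff hident hv).1 hn)

end satMap

theorem InSat.inCl {dom : Const → Attr} {D : Set (Tup Attr Const)} {FD : Set (FDep Attr)}
    (hFD : GoodFD FD) {t : Tup Attr Const} {c : Const}
    (h : InSat dom (insert t D) FD t c) : InCl dom D FD t c := by
  suffices ∀ u c, InSat dom (insert t D) FD u c → u = t → InCl dom D FD t c from this t c h rfl
  intro u c h
  induction h with
  | base hb => rintro rfl; exact .base _ _ hb
  | @step fd x w v a hfd hwfx hschx hdoma hw hwx hwa _ _ _ ihvx =>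
    rintro rfl
    refine .step fd x a hfd hwfx hschx hdoma (fun c ⟨b, hbc⟩ => ihvx b c hbc rfl) ?_
    intro μ hμ
    obtain ⟨m, hm⟩ := hμ.1 w hw
    have hxa : x (dom a) = none := hdoma ▸ hFD.apply_eq_none hfd hschx
    exact ⟨m, (mem_tmap_extend hxa).2
      ⟨fun b c hbc => (hwx b c hbc).mem_closure μ hμ hm, hwa.mem_closure μ hμ hm⟩⟩

theorem exists_satDB_not_subset_of_not_inCl {dom : Const → Attr} {D : Set (Tup Attr Const)}
    (hD : D.Countable) {FD : Set (FDep Attr)} (hFD : GoodFD FD) {t : Tup Attr Const}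
    {a : Const} (ha : ¬ InCl dom D FD t a) :
    ∃ μ : TMap Const, SatDB dom μ D FD ∧ ¬ tmap μ t ⊆ μ a := by
  obtain ⟨ident, hident⟩ := Set.countable_iff_exists_injOn.1 (hD.insert t)
  have ht : t ∈ insert t D := Set.mem_insert t D
  have hsat := satDB_satMap (dom := dom) hident hFD
  refine ⟨satMap dom (insert t D) FD ident,
    ⟨fun u hu => hsat.1 u (Set.mem_insert_of_mem t hu), hsat.2⟩, fun hsub => ha ?_⟩
  have ht_t : ident t ∈ tmap (satMap dom (insert t D) FD ident) t :=
    (ident_mem_tmap_satMap_iff hident ht).2 fun _ _ => InSat.base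
  exact ((ident_mem_satMap_iff hident ht).1 (hsub ht_t)).inCl hFD

theorem closure_algorithm_complete_general (dom : Const → Attr)
    (D : Set (Tup Attr Const)) (hDfin : D.Finite)
    (FD : Set (FDep Attr)) (hFD : GoodFD FD)
    (t : Tup Attr Const) :
    ∀ a : Const,
      (¬ InCl dom D FD t a →
        ∃ μ : TMap Const, SatDB dom μ D FD ∧ ¬ tmap μ t ⊆ μ a) ∧
      (InCl dom D FD t a ↔ a ∈ closure dom D FD t) := by
  intro a
  have complete : ¬ InCl dom D FD t a → ∃ μ, SatDB dom μ D FD ∧ ¬ tmap μ t ⊆ μ a :=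
    exists_satDB_not_subset_of_not_inCl hDfin.countable hFD
  refine ⟨complete, fun h => h.mem_closure hFD, fun ha => ?_⟩
  by_contra hna
  obtain ⟨μ, hμ, hsub⟩ := complete hna
  exact hsub (ha μ hμ)

/-- completeness of the closure algorithm: a constant not in the computed
closure is omitted by some T-mapping satisfying `Δ`; hence the algorithm computes exactly
the closure `t⁺ = {a : ∀ μ ⊨ Δ, μ(t) ⊆ μ(a)}`. -/
theorem closure_algorithm_complete [Fintype Attr] (dom : Const → Attr)
    (D : Set (Tup Attr Const)) (hDfin : D.Finite) (hDwf : ∀ u ∈ D, WF dom u)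
    (FD : Set (FDep Attr)) (hFD : GoodFD FD)
    (t : Tup Attr Const) (hwt : WF dom t) :
    ∀ a : Const,
      (¬ InCl dom D FD t a →
        ∃ μ : TMap Const, SatDB dom μ D FD ∧ ¬ tmap μ t ⊆ μ a) ∧
      (InCl dom D FD t a ↔ a ∈ closure dom D FD t) :=
  closure_algorithm_complete_general dom D hDfin FD hFD t

end IncPaper
end
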